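/- arXiv:2007.14500 — 5 statements merged into one kernel-verified Lean document; each statement's English description precedes it below -/
import Mathlib

section
/- In a FIDL-module ⟨A, B, f, i⟩, if G is a filter of A and H is a filter of B, then the set i(H,G) = {x ∈ A : ∃ h ∈ H, ∃ g ∈ G, g ≤ i(h,x)} is a filter of A. -/
def IsLatFilter {α : Type*} [Lattice α] [BoundedOrder α] (F : Set α) : Prop :=
  ⊤ ∈ F ∧ (∀ x y : α, x ∈ F → x ≤ y → y ∈ F) ∧ ∀ x y : α, x ∈ F → y ∈ F → x ⊓ y ∈ F

def IsPrimeLatFilter {α : Type*} [Lattice α] [BoundedOrder α] (F : Set α) : Prop :=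
  IsLatFilter F ∧ F ≠ Set.univ ∧ ∀ x y : α, x ⊔ y ∈ F → x ∈ F ∨ y ∈ F

def IsFIDL {A B : Type*} [DistribLattice A] [BoundedOrder A]
    [DistribLattice B] [BoundedOrder B] (f : A → B → A) (i : B → A → A) : Prop :=
  (∀ x y : A, ∀ b : B, f (x ⊔ y) b = f x b ⊔ f y b) ∧
  (∀ x : A, ∀ b c : B, f x (b ⊔ c) = f x b ⊔ f x c) ∧
  (∀ b : B, f ⊥ b = ⊥) ∧
  (∀ x : A, f x ⊥ = ⊥) ∧
  (∀ b : B, ∀ x y : A, i b (x ⊓ y) = i b x ⊓ i b y) ∧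
  (∀ b c : B, ∀ x : A, i (b ⊔ c) x = i b x ⊓ i c x) ∧
  (∀ b : B, i b ⊤ = ⊤)

def fSet {A B : Type*} [Lattice A] (f : A → B → A) (G : Set A) (H : Set B) : Set A :=
  {x : A | ∃ g ∈ G, ∃ h ∈ H, f g h ≤ x}

def iSet {A B : Type*} [Lattice A] (i : B → A → A) (H : Set B) (G : Set A) : Set A :=
  {x : A | ∃ h ∈ H, ∃ g ∈ G, g ≤ i h x}

/-! The laws of `i` make it monotone in its second argument and antitone in its first, so
witnesses `g₁ ≤ i h₁ x` and `g₂ ≤ i h₂ y` combine to `g₁ ⊓ g₂ ≤ i (h₁ ⊓ h₂) (x ⊓ y)`. -/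

theorem monotone_of_map_inf {α β : Type*} [Lattice α] [SemilatticeInf β] {g : α → β}
    (hg : ∀ x y, g (x ⊓ y) = g x ⊓ g y) : Monotone g :=
  OrderHomClass.monotone (InfHom.mk g hg)

theorem antitone_of_map_sup_eq_inf {α β : Type*} [Lattice α] [SemilatticeInf β] {g : α → β}
    (hg : ∀ x y, g (x ⊔ y) = g x ⊓ g y) : Antitone g := fun x y hxy =>
  calc g y = g (x ⊔ y) := by rw [sup_eq_right.mpr hxy]
    _ = g x ⊓ g y := hg x y
    _ ≤ g x := inf_le_left

theorem isLatFilter_iSet {A B : Type*} [Lattice A] [BoundedOrder A] [Lattice B] [BoundedOrder B]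
    {i : B → A → A} (hinf : ∀ b x y, i b (x ⊓ y) = i b x ⊓ i b y)
    (hsup : ∀ b c x, i (b ⊔ c) x = i b x ⊓ i c x) (htop : ∀ b, i b ⊤ = ⊤)
    {G : Set A} {H : Set B} (hG : IsLatFilter G) (hH : IsLatFilter H) :
    IsLatFilter (iSet i H G) := by
  have hmono (b : B) : Monotone (i b) := monotone_of_map_inf (hinf b)
  have hanti (x : A) : Antitone (i · x) := antitone_of_map_sup_eq_inf (hsup · · x)
  refine ⟨⟨⊤, hH.1, ⊤, hG.1, (htop ⊤).ge⟩, ?_, ?_⟩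
  · rintro x y ⟨h, hh, g, hg, hle⟩ hxy
    exact ⟨h, hh, g, hg, hle.trans (hmono h hxy)⟩
  · rintro x y ⟨h₁, hh₁, g₁, hg₁, hle₁⟩ ⟨h₂, hh₂, g₂, hg₂, hle₂⟩
    refine ⟨h₁ ⊓ h₂, hH.2.2 _ _ hh₁ hh₂, g₁ ⊓ g₂, hG.2.2 _ _ hg₁ hg₂, ?_⟩
    rw [hinf]
    exact inf_le_inf (hle₁.trans (hanti x inf_le_left)) (hle₂.trans (hanti y inf_le_right))

theorem stmt_2 {A B : Type*} [DistribLattice A] [BoundedOrder A]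
    [DistribLattice B] [BoundedOrder B] (f : A → B → A) (i : B → A → A)
    (hM : IsFIDL f i) (G : Set A) (H : Set B)
    (hG : IsLatFilter G) (hH : IsLatFilter H) :
    IsLatFilter (iSet i H G) := by
  obtain ⟨-, -, -, -, hinf, hsup, htop⟩ := hM
  exact isLatFilter_iSet hinf hsup htop hG hH
end

section
/- Let ⟨A, B, f, i⟩ be a FIDL-module, G a filter of A, H a filter of B, and P a prime filter of A. If f(G,H) ⊆ P, then there exist a prime filter Q of A and a prime filter R of B such that G ⊆ Q, H ⊆ R, and f(Q,R) ⊆ P, where f(Q,R) = {x ∈ A : ∃ q ∈ Q, ∃ r ∈ R, f(q,r) ≤ x}. -/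
/-!
Two applications of the prime filter theorem. Since `P` is prime and `f` preserves joins in its
first argument, the elements `a` with `f a h ∉ P` for some `h ∈ H` form an ideal of `A`, disjoint
from `G` because `f(G,H) ⊆ P`; a prime filter `Q ⊇ G` avoiding it satisfies `f(Q,H) ⊆ P`. The same
argument in the second argument of `f`, with `Q` in place of `G`, yields `R`.
-/

open Order

theorem monotone_of_map_sup {α β : Type*} [SemilatticeSup α] [SemilatticeSup β] {g : α → β}
    (hg : ∀ x y, g (x ⊔ y) = g x ⊔ g y) : Monotone g := fun x y hxy => by
  rw [← sup_eq_right.2 hxy, hg]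
  exact le_sup_left

section LatFilter

variable {α : Type*} [Lattice α] [BoundedOrder α] {F : Set α}

theorem IsLatFilter.isPFilter (hF : IsLatFilter F) : IsPFilter F :=
  .of_def ⟨⊤, hF.1⟩ (fun x hx y hy => ⟨x ⊓ y, hF.2.2 x y hx hy, inf_le_left, inf_le_right⟩)
    fun hxy hx => hF.2.1 _ _ hx hxy

theorem IsLatFilter.of_isPFilter (hF : IsPFilter F) : IsLatFilter F :=
  let F' := hF.toPFilter
  ⟨F'.top_mem, fun _ _ hx hxy => F'.mem_of_le hxy hx, fun _ _ hx hy => F'.inf_mem hx hy⟩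

theorem isPrimeLatFilter_compl {J : Ideal α} (hJ : J.IsPrime) : IsPrimeLatFilter (J : Set α)ᶜ := by
  refine ⟨.of_isPFilter hJ.compl_filter, ?_, fun x y hxy => ?_⟩
  · obtain ⟨x, hx⟩ := J.nonempty
    exact fun h => (h ▸ Set.mem_univ x : x ∈ (J : Set α)ᶜ) hx
  · by_contra! h
    exact hxy (J.sup_mem (not_not.1 h.1) (not_not.1 h.2))

theorem IsPrimeLatFilter.bot_notMem {P : Set α} (hP : IsPrimeLatFilter P) : ⊥ ∉ P :=
  fun h => hP.2.1 (Set.eq_univ_of_forall fun _ => hP.1.2.1 _ _ h bot_le)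

theorem IsPrimeLatFilter.sup_notMem {P : Set α} (hP : IsPrimeLatFilter P) {x y : α}
    (hx : x ∉ P) (hy : y ∉ P) : x ⊔ y ∉ P := fun h => (hP.2.2 x y h).elim hx hy

end LatFilter

theorem exists_isPrimeLatFilter_of_disjoint {α : Type*} [DistribLattice α] [BoundedOrder α]
    {F I : Set α} (hF : IsLatFilter F) (hI : IsIdeal I) (hFI : Disjoint F I) :
    ∃ Q, IsPrimeLatFilter Q ∧ F ⊆ Q ∧ Disjoint Q I := by
  obtain ⟨J, hJ, hIJ, hFJ⟩ :=
    DistribLattice.prime_ideal_of_disjoint_filter_ideal (F := hF.isPFilter.toPFilter)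
      (I := hI.toIdeal) hFI
  exact ⟨_, isPrimeLatFilter_compl hJ, hFJ.subset_compl_right,
    disjoint_compl_left.mono_right hIJ⟩

theorem isIdeal_setOf_exists_notMem {α β A : Type*} [Lattice α] [OrderBot α] [Lattice β]
    [BoundedOrder β] [Lattice A] [BoundedOrder A] {g : α → β → A} {H : Set β} {P : Set A}
    (hP : IsPrimeLatFilter P) (hH : IsLatFilter H)
    (hsup : ∀ x y b, g (x ⊔ y) b = g x b ⊔ g y b) (hbot : ∀ b, g ⊥ b = ⊥)
    (hmono : ∀ a, Monotone (g a)) :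
    IsIdeal {a | ∃ h ∈ H, g a h ∉ P} := by
  have hP_up : ∀ {x y}, x ≤ y → y ∉ P → x ∉ P := fun hxy hy hx => hy (hP.1.2.1 _ _ hx hxy)
  refine ⟨fun a b hba ⟨h, hh, ha⟩ => ?_, ⟨⊥, ⊤, hH.1, ?_⟩,
    fun a ⟨h, hh, ha⟩ a' ⟨h', hh', ha'⟩ => ?_⟩
  · exact ⟨h, hh, hP_up (monotone_of_map_sup (g := (g · h)) (hsup · · h) hba) ha⟩
  · rw [hbot]
    exact hP.bot_notMem
  · refine ⟨a ⊔ a', ⟨h ⊓ h', hH.2.2 _ _ hh hh', ?_⟩, le_sup_left, le_sup_right⟩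
    rw [hsup]
    exact hP.sup_notMem (hP_up (hmono a inf_le_left) ha) (hP_up (hmono a' inf_le_right) ha')

theorem exists_isPrimeLatFilter_forall_mem {α β A : Type*} [DistribLattice α] [BoundedOrder α]
    [Lattice β] [BoundedOrder β] [Lattice A] [BoundedOrder A] {g : α → β → A}
    {F : Set α} {H : Set β} {P : Set A} (hP : IsPrimeLatFilter P) (hF : IsLatFilter F)
    (hH : IsLatFilter H) (hsup : ∀ x y b, g (x ⊔ y) b = g x b ⊔ g y b) (hbot : ∀ b, g ⊥ b = ⊥)
    (hmono : ∀ a, Monotone (g a)) (hFH : ∀ a ∈ F, ∀ h ∈ H, g a h ∈ P) :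
    ∃ Q, IsPrimeLatFilter Q ∧ F ⊆ Q ∧ ∀ q ∈ Q, ∀ h ∈ H, g q h ∈ P := by
  obtain ⟨Q, hQ, hFQ, hQI⟩ := exists_isPrimeLatFilter_of_disjoint hF
    (isIdeal_setOf_exists_notMem hP hH hsup hbot hmono)
    (Set.disjoint_left.2 fun a ha ⟨h, hh, hn⟩ => hn (hFH a ha h hh))
  exact ⟨Q, hQ, hFQ, fun q hq h hh => by_contra fun hn => Set.disjoint_left.1 hQI hq ⟨h, hh, hn⟩⟩

theorem fSet_subset_iff {A B : Type*} [Lattice A] [BoundedOrder A] {f : A → B → A}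
    {G P : Set A} {H : Set B} (hP : IsLatFilter P) :
    fSet f G H ⊆ P ↔ ∀ g ∈ G, ∀ h ∈ H, f g h ∈ P :=
  ⟨fun hGH g hg h hh => hGH ⟨g, hg, h, hh, le_rfl⟩,
    fun hGH _ ⟨g, hg, h, hh, hx⟩ => hP.2.1 _ _ (hGH g hg h hh) hx⟩

theorem stmt_3 {A B : Type*} [DistribLattice A] [BoundedOrder A]
    [DistribLattice B] [BoundedOrder B] (f : A → B → A) (i : B → A → A)
    (hM : IsFIDL f i) (G : Set A) (H : Set B) (P : Set A)
    (hG : IsLatFilter G) (hH : IsLatFilter H) (hP : IsPrimeLatFilter P)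
    (hsub : fSet f G H ⊆ P) :
    ∃ Q : Set A, ∃ R : Set B, IsPrimeLatFilter Q ∧ IsPrimeLatFilter R ∧
      G ⊆ Q ∧ H ⊆ R ∧ fSet f Q R ⊆ P := by
  obtain ⟨hsup_left, hsup_right, hbot_left, hbot_right, -⟩ := hM
  have hmono_left : ∀ b, Monotone (f · b) := fun b => monotone_of_map_sup (hsup_left · · b)
  have hmono_right : ∀ a, Monotone (f a) := fun a => monotone_of_map_sup (hsup_right a)
  obtain ⟨Q, hQ, hGQ, hQH⟩ := exists_isPrimeLatFilter_forall_mem hP hG hH hsup_left hbot_left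
    hmono_right ((fSet_subset_iff hP.1).1 hsub)
  obtain ⟨R, hR, hHR, hRQ⟩ := exists_isPrimeLatFilter_forall_mem (g := flip f) hP hH hQ.1
    (fun x y a => hsup_right a x y) hbot_right hmono_left fun h hh q hq => hQH q hq h hh
  exact ⟨Q, R, hQ, hR, hGQ, hHR, (fSet_subset_iff hP.1).2 fun q hq r hr => hRQ r hr q hq⟩
end

section
/- Let X, Y be posets, R ⊆ X × Y × X with the property that (x,y,z) ∈ R, x' ≤ x, y' ≤ y, z ≤ z' imply (x',y',z') ∈ R, and T ⊆ Y × X × X with the property that (y,x,z) ∈ T, y' ≤ y, x' ≤ x, z ≤ z' imply (y',x',z') ∈ T. Then the structure ⟨P_i(X), P_i(Y), f, i⟩, where P_i denotes the lattice of upward-closed sets, f(U,V) = {z : ∃ x ∈ U, y ∈ V with (x,y,z) ∈ R}, and i(V,U) = {x : ∀ y ∈ V, ∀ z, (y,x,z) ∈ T implies z ∈ U}, is a FIDL-module. -/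
def frameF {X Y : Type*} (R : X → Y → X → Prop) (U : Set X) (V : Set Y) : Set X :=
  {z : X | ∃ x ∈ U, ∃ y ∈ V, R x y z}

def frameI {X Y : Type*} (T : Y → X → X → Prop) (V : Set Y) (U : Set X) : Set X :=
  {x : X | ∀ y : Y, ∀ z : X, T y x z → y ∈ V → z ∈ U}

section frameF

variable {X Y : Type*} (R : X → Y → X → Prop)

theorem isUpperSet_frameF [Preorder X] (hR : ∀ x y z z', R x y z → z ≤ z' → R x y z')
    (U : Set X) (V : Set Y) : IsUpperSet (frameF R U V) := by
  rintro z z' hzz' ⟨x, hx, y, hy, hr⟩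
  exact ⟨x, hx, y, hy, hR x y z z' hr hzz'⟩

theorem frameF_union_left (U₁ U₂ : Set X) (V : Set Y) :
    frameF R (U₁ ∪ U₂) V = frameF R U₁ V ∪ frameF R U₂ V := by
  ext z
  simp only [frameF, Set.mem_union, Set.mem_ofPred_eq, or_and_right, exists_or]

theorem frameF_union_right (U : Set X) (V₁ V₂ : Set Y) :
    frameF R U (V₁ ∪ V₂) = frameF R U V₁ ∪ frameF R U V₂ := by
  ext z
  simp only [frameF, Set.mem_union, Set.mem_ofPred_eq, or_and_right, exists_or, and_or_left]

@[simp]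
theorem frameF_empty_left (V : Set Y) : frameF R ∅ V = ∅ := by
  simp [frameF]

@[simp]
theorem frameF_empty_right (U : Set X) : frameF R U ∅ = ∅ := by
  simp [frameF]

end frameF

section frameI

variable {X Y : Type*} (T : Y → X → X → Prop)

theorem isUpperSet_frameI [Preorder X] (hT : ∀ y x x' z, T y x' z → x ≤ x' → T y x z)
    (V : Set Y) (U : Set X) : IsUpperSet (frameI T V U) := by
  intro x x' hxx' hx y z ht hy
  exact hx y z (hT y x x' z ht hxx') hy

theorem frameI_inter (V : Set Y) (U₁ U₂ : Set X) :
    frameI T V (U₁ ∩ U₂) = frameI T V U₁ ∩ frameI T V U₂ := by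
  ext x
  simp only [frameI, Set.mem_inter_iff, Set.mem_ofPred_eq, imp_and, forall_and]

theorem frameI_union (V₁ V₂ : Set Y) (U : Set X) :
    frameI T (V₁ ∪ V₂) U = frameI T V₁ U ∩ frameI T V₂ U := by
  ext x
  simp only [frameI, Set.mem_union, Set.mem_inter_iff, Set.mem_ofPred_eq, or_imp, forall_and]

@[simp]
theorem frameI_univ (V : Set Y) : frameI T V Set.univ = Set.univ := by
  simp [frameI]

end frameI

theorem stmt_9 {X Y : Type*} [PartialOrder X] [PartialOrder Y]
    (R : X → Y → X → Prop) (T : Y → X → X → Prop)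
    (hR : ∀ x y z x' y' z', R x y z → x' ≤ x → y' ≤ y → z ≤ z' → R x' y' z')
    (hT : ∀ y x z y' x' z', T y x z → y' ≤ y → x' ≤ x → z ≤ z' → T y' x' z') :
    (∀ (U : Set X) (V : Set Y), IsUpperSet U → IsUpperSet V →
        IsUpperSet (frameF R U V) ∧ IsUpperSet (frameI T V U)) ∧
    (∀ (U₁ U₂ : Set X) (V : Set Y), IsUpperSet U₁ → IsUpperSet U₂ → IsUpperSet V →
        frameF R (U₁ ∪ U₂) V = frameF R U₁ V ∪ frameF R U₂ V) ∧
    (∀ (U : Set X) (V₁ V₂ : Set Y), IsUpperSet U → IsUpperSet V₁ → IsUpperSet V₂ →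
        frameF R U (V₁ ∪ V₂) = frameF R U V₁ ∪ frameF R U V₂) ∧
    (∀ V : Set Y, IsUpperSet V → frameF R (∅ : Set X) V = ∅) ∧
    (∀ U : Set X, IsUpperSet U → frameF R U (∅ : Set Y) = ∅) ∧
    (∀ (V : Set Y) (U₁ U₂ : Set X), IsUpperSet V → IsUpperSet U₁ → IsUpperSet U₂ →
        frameI T V (U₁ ∩ U₂) = frameI T V U₁ ∩ frameI T V U₂) ∧
    (∀ (V₁ V₂ : Set Y) (U : Set X), IsUpperSet V₁ → IsUpperSet V₂ → IsUpperSet U →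
        frameI T (V₁ ∪ V₂) U = frameI T V₁ U ∩ frameI T V₂ U) ∧
    (∀ V : Set Y, IsUpperSet V → frameI T V (Set.univ : Set X) = Set.univ) := by
  have hR' : ∀ x y z z', R x y z → z ≤ z' → R x y z' := fun x y z z' hr hz =>
    hR x y z x y z' hr le_rfl le_rfl hz
  have hT' : ∀ y x x' z, T y x' z → x ≤ x' → T y x z := fun y x x' z ht hx =>
    hT y x' z y x z ht le_rfl hx le_rfl
  exact ⟨fun U V _ _ => ⟨isUpperSet_frameF R hR' U V, isUpperSet_frameI T hT' V U⟩,
    fun U₁ U₂ V _ _ _ => frameF_union_left R U₁ U₂ V,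
    fun U V₁ V₂ _ _ _ => frameF_union_right R U V₁ V₂,
    fun V _ => frameF_empty_left R V,
    fun U _ => frameF_empty_right R U,
    fun V U₁ U₂ _ _ _ => frameI_inter T V U₁ U₂,
    fun V₁ V₂ U _ _ _ => frameI_union T V₁ V₂ U,
    fun V _ => frameI_univ T V⟩
end

section
/- Let ⟨A, B, f, i⟩ and ⟨A', B', f', i'⟩ be FIDL-modules and (α, γ) a FIDL-homomorphism between them. For prime filters Q' of A' and R' of B' and P' of A', if f'(Q', R') ⊆ P', then f(α⁻¹(Q'), γ⁻¹(R')) ⊆ α⁻¹(P'); and if i'(R', P') ⊆ Q', then i(γ⁻¹(R'), α⁻¹(P')) ⊆ α⁻¹(Q'). Here for prime filters Q, R, f(Q,R) = {x : ∃ q ∈ Q, r ∈ R, f(q,r) ≤ x} and i(R,P) = {x : ∃ r ∈ R, p ∈ P, p ≤ i(r,x)}. -/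
section Transport

variable {A B A' B' : Type*} [Lattice A] [Lattice A'] {α : A → A'} {γ : B → B'}

theorem fSet_preimage_subset_preimage_fSet {f : A → B → A} {f' : A' → B' → A'}
    (hα : Monotone α) (hf : ∀ x b, α (f x b) = f' (α x) (γ b)) (Q : Set A') (R : Set B') :
    fSet f (α ⁻¹' Q) (γ ⁻¹' R) ⊆ α ⁻¹' fSet f' Q R := by
  rintro x ⟨q, hq, r, hr, hle⟩
  exact ⟨α q, hq, γ r, hr, hf q r ▸ hα hle⟩

theorem iSet_preimage_subset_preimage_iSet {i : B → A → A} {i' : B' → A' → A'}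
    (hα : Monotone α) (hi : ∀ b x, α (i b x) = i' (γ b) (α x)) (R : Set B') (P : Set A') :
    iSet i (γ ⁻¹' R) (α ⁻¹' P) ⊆ α ⁻¹' iSet i' R P := by
  rintro x ⟨r, hr, p, hp, hle⟩
  exact ⟨γ r, hr, α p, hp, hi r x ▸ hα hle⟩

end Transport

theorem stmt_16_general {A B A' B' : Type*} [DistribLattice A] [BoundedOrder A]
    [DistribLattice B] [BoundedOrder B] [DistribLattice A'] [BoundedOrder A']
    [DistribLattice B'] [BoundedOrder B']
    (f : A → B → A) (i : B → A → A) (f' : A' → B' → A') (i' : B' → A' → A')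
    (α : A → A') (γ : B → B')
    (hα : ∀ x y : A, α (x ⊔ y) = α x ⊔ α y ∧ α (x ⊓ y) = α x ⊓ α y)
    (hf : ∀ (x : A) (b : B), α (f x b) = f' (α x) (γ b))
    (hi : ∀ (b : B) (x : A), α (i b x) = i' (γ b) (α x))
    (Q' P' : Set A') (R' : Set B') :
    (fSet f' Q' R' ⊆ P' → fSet f (α ⁻¹' Q') (γ ⁻¹' R') ⊆ α ⁻¹' P') ∧
    (iSet i' R' P' ⊆ Q' → iSet i (γ ⁻¹' R') (α ⁻¹' P') ⊆ α ⁻¹' Q') := by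
  have hmono : Monotone α := OrderHomClass.mono (SupHom.mk α fun x y ↦ (hα x y).1)
  exact ⟨fun h ↦ (fSet_preimage_subset_preimage_fSet hmono hf Q' R').trans (Set.preimage_mono h),
    fun h ↦ (iSet_preimage_subset_preimage_iSet hmono hi R' P').trans (Set.preimage_mono h)⟩

theorem stmt_16 {A B A' B' : Type*} [DistribLattice A] [BoundedOrder A]
    [DistribLattice B] [BoundedOrder B] [DistribLattice A'] [BoundedOrder A']
    [DistribLattice B'] [BoundedOrder B']
    (f : A → B → A) (i : B → A → A) (f' : A' → B' → A') (i' : B' → A' → A')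
    (hM : IsFIDL f i) (hM' : IsFIDL f' i')
    (α : A → A') (γ : B → B')
    (hα : ∀ x y : A, α (x ⊔ y) = α x ⊔ α y ∧ α (x ⊓ y) = α x ⊓ α y)
    (hα0 : α ⊥ = ⊥) (hα1 : α ⊤ = ⊤)
    (hγ : ∀ b c : B, γ (b ⊔ c) = γ b ⊔ γ c ∧ γ (b ⊓ c) = γ b ⊓ γ c)
    (hγ0 : γ ⊥ = ⊥) (hγ1 : γ ⊤ = ⊤)
    (hf : ∀ (x : A) (b : B), α (f x b) = f' (α x) (γ b))
    (hi : ∀ (b : B) (x : A), α (i b x) = i' (γ b) (α x))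
    (Q' P' : Set A') (R' : Set B')
    (hQ' : IsPrimeLatFilter Q') (hR' : IsPrimeLatFilter R') (hP' : IsPrimeLatFilter P') :
    (fSet f' Q' R' ⊆ P' → fSet f (α ⁻¹' Q') (γ ⁻¹' R') ⊆ α ⁻¹' P') ∧
    (iSet i' R' P' ⊆ Q' → iSet i (γ ⁻¹' R') (α ⁻¹' P') ⊆ α ⁻¹' Q') :=
  stmt_16_general f i f' i' α γ hα hf hi Q' P' R'
end

section
/- Let ⟨A, B, f, i⟩ be a FIDL-module, A' a bounded sublattice of A, and B' a bounded sublattice of B such that f(a,b) ∈ A' for every a ∈ A', b ∈ B'. Then for all prime filters P, Q, Q₁ of A and R₁ of B, if f(Q₁,R₁) ⊆ P and P ∩ A' ⊆ Q, there exist prime filters Q₂ of A and R₂ of B such that Q₁ ∩ A' ⊆ Q₂, R₁ ∩ B' ⊆ R₂, and f(Q₂,R₂) ⊆ Q. -/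
def IsBddSublattice {α : Type*} [Lattice α] [BoundedOrder α] (S : Set α) : Prop :=
  ⊥ ∈ S ∧ ⊤ ∈ S ∧ (∀ x ∈ S, ∀ y ∈ S, x ⊔ y ∈ S) ∧ (∀ x ∈ S, ∀ y ∈ S, x ⊓ y ∈ S)

/-!
By Zorn's lemma, the pair of filters generated by `Q₁ ∩ A'` and `R₁ ∩ B'` extends to a pair
`(F, G)` of filters that is maximal subject to `f(F, G) ⊆ Q`; the start pair satisfies this
because `f(q, r) ∈ P ∩ A' ⊆ Q` for `q ∈ Q₁ ∩ A'`, `r ∈ R₁ ∩ B'`. Maximality makes `F` and `G`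
prime: if `x ∉ F`, the filter generated by `F ∪ {x}` breaks the condition, so some
`f(a ⊓ x, b) ∉ Q`; were `x ⊔ y ∈ F` with `x, y ∉ F`, distributivity and the primality of `Q`
would put one of these witnesses in `Q`.
-/

open Set

section Filters

variable {α : Type*} [Lattice α] [BoundedOrder α]

lemma IsLatFilter.isUpperSet {F : Set α} (hF : IsLatFilter F) : IsUpperSet F :=
  fun x y hxy hx => hF.2.1 x y hx hxy

lemma IsLatFilter.infClosed {F : Set α} (hF : IsLatFilter F) : InfClosed F :=
  fun x hx y hy => hF.2.2 x y hx hy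

lemma IsBddSublattice.infClosed {S : Set α} (hS : IsBddSublattice S) : InfClosed S :=
  fun x hx y hy => hS.2.2.2 x hx y hy

lemma isLatFilter_upperClosure {S : Set α} (hne : S.Nonempty) (hS : InfClosed S) :
    IsLatFilter (upperClosure S : Set α) := by
  obtain ⟨s, hs⟩ := hne
  refine ⟨mem_upperClosure.2 ⟨s, hs, le_top⟩, fun x y hx hxy => (upperClosure S).upper hxy hx, ?_⟩
  intro x y hx hy
  obtain ⟨a, ha, hax⟩ := mem_upperClosure.1 hx
  obtain ⟨b, hb, hby⟩ := mem_upperClosure.1 hy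
  exact mem_upperClosure.2 ⟨a ⊓ b, hS ha hb, inf_le_inf hax hby⟩

lemma IsLatFilter.sUnion_of_isChain {c : Set (Set α)} (hne : c.Nonempty)
    (hc : ∀ F ∈ c, IsLatFilter F) (hchain : IsChain (· ⊆ ·) c) : IsLatFilter (⋃₀ c) := by
  obtain ⟨F, hF⟩ := hne
  refine ⟨⟨F, hF, (hc F hF).1⟩, ?_, ?_⟩
  · rintro x y ⟨G, hG, hx⟩ hxy
    exact ⟨G, hG, (hc G hG).2.1 x y hx hxy⟩
  · rintro x y ⟨G, hG, hx⟩ ⟨H, hH, hy⟩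
    obtain ⟨K, hK, hGK, hHK⟩ := hchain.directedOn G hG H hH
    exact ⟨K, hK, (hc K hK).2.2 x y (hGK hx) (hHK hy)⟩

end Filters

lemma fSet_subset_iff_s18 {A B : Type*} [Lattice A] {f : A → B → A} {G : Set A} {H : Set B}
    {Q : Set A} (hQ : IsUpperSet Q) : fSet f G H ⊆ Q ↔ image2 f G H ⊆ Q := by
  refine ⟨fun h => image2_subset_iff.2 fun g hg b hb => h ⟨g, hg, b, hb, le_rfl⟩, ?_⟩
  rintro h x ⟨g, hg, b, hb, hx⟩
  exact hQ hx (h (mem_image2_of_mem hg hb))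

section FilterPairs

variable {α β γ : Type*} [Lattice α] [BoundedOrder α] [Lattice β] [BoundedOrder β]
  {φ : α → β → γ} {Q : Set γ}

def IsFilterPairInto (φ : α → β → γ) (Q : Set γ) (p : Set α × Set β) : Prop :=
  IsLatFilter p.1 ∧ IsLatFilter p.2 ∧ image2 φ p.1 p.2 ⊆ Q

lemma IsFilterPairInto.exists_le_maximal {p₀ : Set α × Set β} (h₀ : IsFilterPairInto φ Q p₀) :
    ∃ m, p₀ ≤ m ∧ Maximal (IsFilterPairInto φ Q) m := by
  refine zorn_le_nonempty₀ {p | IsFilterPairInto φ Q p} (fun c hc hchain p hp => ?_) p₀ h₀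
  have hchain₁ := hchain.image_of_map_rel _ (· ⊆ ·) Prod.fst fun _ _ h => h.1
  have hchain₂ := hchain.image_of_map_rel _ (· ⊆ ·) Prod.snd fun _ _ h => h.2
  refine ⟨(⋃₀ (Prod.fst '' c), ⋃₀ (Prod.snd '' c)), ⟨?_, ?_, ?_⟩, fun q hq =>
    ⟨subset_sUnion_of_mem (mem_image_of_mem _ hq), subset_sUnion_of_mem (mem_image_of_mem _ hq)⟩⟩
  · exact IsLatFilter.sUnion_of_isChain ⟨_, mem_image_of_mem _ hp⟩
      (forall_mem_image.2 fun q hq => (hc hq).1) hchain₁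
  · exact IsLatFilter.sUnion_of_isChain ⟨_, mem_image_of_mem _ hp⟩
      (forall_mem_image.2 fun q hq => (hc hq).2.1) hchain₂
  · rintro _ ⟨x, ⟨_, ⟨q, hq, rfl⟩, hx⟩, y, ⟨_, ⟨r, hr, rfl⟩, hy⟩, rfl⟩
    obtain ⟨s, hs, hqs, hrs⟩ := hchain.directedOn q hq r hr
    exact (hc hs).2.2 (mem_image2_of_mem (hqs.1 hx) (hrs.2 hy))

lemma Maximal.fst_isFilterPairInto {m : Set α × Set β}
    (hm : Maximal (IsFilterPairInto φ Q) m) :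
    Maximal (fun F => IsLatFilter F ∧ image2 φ F m.2 ⊆ Q) m.1 :=
  ⟨⟨hm.1.1, hm.1.2.2⟩, fun F hF hle =>
    (hm.2 (y := (F, m.2)) ⟨hF.1, hm.1.2.1, hF.2⟩ ⟨hle, le_rfl⟩).1⟩

lemma Maximal.snd_isFilterPairInto {m : Set α × Set β}
    (hm : Maximal (IsFilterPairInto φ Q) m) :
    Maximal (fun G => IsLatFilter G ∧ image2 (flip φ) G m.1 ⊆ Q) m.2 := by
  refine ⟨⟨hm.1.2.1, by rw [← image2_swap]; exact hm.1.2.2⟩, fun G hG hle => ?_⟩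
  have hGQ : image2 φ m.1 G ⊆ Q := by rw [image2_swap]; exact hG.2
  exact (hm.2 (y := (m.1, G)) ⟨hm.1.1, hG.1, hGQ⟩ ⟨le_rfl, hle⟩).2

end FilterPairs

section Primality

variable {α β γ : Type*} {φ : α → β → γ} {F : Set α} {G : Set β} {Q : Set γ}

/-- The witness that the filter generated by `F ∪ {x}` violates the maximality of `F`. -/
lemma exists_map_inf_notMem_of_maximal [Lattice α] [BoundedOrder α] [Preorder γ]
    (hQ : IsUpperSet Q) (hmono₁ : ∀ b, Monotone (φ · b))
    (hF : Maximal (fun F => IsLatFilter F ∧ image2 φ F G ⊆ Q) F) {x : α} (hx : x ∉ F) :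
    ∃ a ∈ F, ∃ b ∈ G, φ (a ⊓ x) b ∉ Q := by
  by_contra! h
  have hxF : InfClosed ((· ⊓ x) '' F) := by
    rintro _ ⟨a, ha, rfl⟩ _ ⟨b, hb, rfl⟩
    exact ⟨a ⊓ b, hF.1.1.2.2 a b ha hb, inf_inf_distrib_right a b x⟩
  have hmem : ∀ a ∈ F, a ⊓ x ∈ (upperClosure ((· ⊓ x) '' F) : Set α) :=
    fun a ha => mem_upperClosure.2 ⟨_, mem_image_of_mem _ ha, le_rfl⟩
  have hext : IsLatFilter (upperClosure ((· ⊓ x) '' F) : Set α) ∧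
      image2 φ (upperClosure ((· ⊓ x) '' F)) G ⊆ Q := by
    refine ⟨isLatFilter_upperClosure (hF.1.1.1 |> mem_image_of_mem _ |> nonempty_of_mem) hxF,
      image2_subset_iff.2 ?_⟩
    rintro a' ha' b hb
    obtain ⟨_, ⟨a, ha, rfl⟩, hle⟩ := mem_upperClosure.1 ha'
    exact hQ (hmono₁ b hle) (h a ha b hb)
  refine hx (hF.2 hext (fun a ha => ?_) ?_)
  · exact (upperClosure _).upper inf_le_left (hmem a ha)
  · simpa using hmem ⊤ hF.1.1.1

lemma isPrimeLatFilter_of_maximal [DistribLattice α] [BoundedOrder α] [Lattice β]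
    [BoundedOrder β] [Lattice γ] [BoundedOrder γ] (hQ : IsPrimeLatFilter Q)
    (hsup : ∀ x y b, φ (x ⊔ y) b = φ x b ⊔ φ y b) (hbot : ∀ b, φ ⊥ b = ⊥)
    (hmono₂ : ∀ a, Monotone (φ a)) (hG : IsLatFilter G)
    (hF : Maximal (fun F => IsLatFilter F ∧ image2 φ F G ⊆ Q) F) : IsPrimeLatFilter F := by
  have ⟨hFfilter, hFG⟩ := hF.1
  have hQup := hQ.1.isUpperSet
  have hmono₁ : ∀ b, Monotone (φ · b) := fun b => Monotone.of_map_sup (hsup · · b)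
  refine ⟨hFfilter, fun hFuniv => hQ.2.1 (eq_univ_of_forall fun z => hQup bot_le ?_), ?_⟩
  · rw [← hbot ⊤]
    exact hFG (mem_image2_of_mem (hFuniv ▸ mem_univ ⊥) hG.1)
  intro x y hxy
  by_contra! hxy'
  obtain ⟨a, ha, b, hb, hx⟩ := exists_map_inf_notMem_of_maximal hQup hmono₁ hF hxy'.1
  obtain ⟨a', ha', b', hb', hy⟩ := exists_map_inf_notMem_of_maximal hQup hmono₁ hF hxy'.2
  have hmem : φ ((a ⊓ a') ⊓ x) (b ⊓ b') ⊔ φ ((a ⊓ a') ⊓ y) (b ⊓ b') ∈ Q := by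
    rw [← hsup, ← inf_sup_left]
    exact hFG (mem_image2_of_mem (hFfilter.2.2 _ _ (hFfilter.2.2 a a' ha ha') hxy)
      (hG.2.2 b b' hb hb'))
  rcases hQ.2.2 _ _ hmem with h | h
  · exact hx (hQup ((hmono₁ _ (inf_le_inf_right x inf_le_left)).trans (hmono₂ _ inf_le_left)) h)
  · exact hy (hQup ((hmono₁ _ (inf_le_inf_right y inf_le_right)).trans (hmono₂ _ inf_le_right)) h)

end Primality

section FIDL

variable {A B : Type*} [DistribLattice A] [BoundedOrder A] [DistribLattice B] [BoundedOrder B]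
  {f : A → B → A} {i : B → A → A}

lemma IsFIDL.monotone_left (hM : IsFIDL f i) (b : B) : Monotone (f · b) :=
  Monotone.of_map_sup (hM.1 · · b)

lemma IsFIDL.monotone_right (hM : IsFIDL f i) (a : A) : Monotone (f a) :=
  Monotone.of_map_sup (hM.2.1 a)

lemma IsFIDL.map_mono (hM : IsFIDL f i) {a a' : A} {b b' : B} (ha : a ≤ a') (hb : b ≤ b') :
    f a b ≤ f a' b' :=
  (hM.monotone_left b ha).trans (hM.monotone_right a' hb)

end FIDL

theorem stmt_18 {A B : Type*} [DistribLattice A] [BoundedOrder A]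
    [DistribLattice B] [BoundedOrder B] (f : A → B → A) (i : B → A → A)
    (hM : IsFIDL f i) (A' : Set A) (B' : Set B)
    (hA' : IsBddSublattice A') (hB' : IsBddSublattice B')
    (hcl : ∀ a ∈ A', ∀ b ∈ B', f a b ∈ A') :
    ∀ P Q Q₁ : Set A, ∀ R₁ : Set B,
      IsPrimeLatFilter P → IsPrimeLatFilter Q → IsPrimeLatFilter Q₁ →
      IsPrimeLatFilter R₁ → fSet f Q₁ R₁ ⊆ P → P ∩ A' ⊆ Q →
      ∃ Q₂ : Set A, ∃ R₂ : Set B, IsPrimeLatFilter Q₂ ∧ IsPrimeLatFilter R₂ ∧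
        Q₁ ∩ A' ⊆ Q₂ ∧ R₁ ∩ B' ⊆ R₂ ∧ fSet f Q₂ R₂ ⊆ Q := by
  intro P Q Q₁ R₁ _ hQ hQ₁ hR₁ hPQ hPA
  have hQup := hQ.1.isUpperSet
  have h₀ : IsFilterPairInto f Q (upperClosure (Q₁ ∩ A'), upperClosure (R₁ ∩ B')) := by
    refine ⟨isLatFilter_upperClosure ⟨⊤, hQ₁.1.1, hA'.2.1⟩ (hQ₁.1.infClosed.inter hA'.infClosed),
      isLatFilter_upperClosure ⟨⊤, hR₁.1.1, hB'.2.1⟩ (hR₁.1.infClosed.inter hB'.infClosed),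
      image2_subset_iff.2 fun a ha b hb => ?_⟩
    obtain ⟨q, hq, hqa⟩ := mem_upperClosure.1 ha
    obtain ⟨r, hr, hrb⟩ := mem_upperClosure.1 hb
    have hP : f q r ∈ P := hPQ ⟨q, hq.1, r, hr.1, le_rfl⟩
    exact hQup (hM.map_mono hqa hrb) (hPA ⟨hP, hcl q hq.2 r hr.2⟩)
  obtain ⟨m, ⟨hle₁, hle₂⟩, hm⟩ := h₀.exists_le_maximal
  refine ⟨m.1, m.2, ?_, ?_, fun x hx => hle₁ (subset_upperClosure hx),
    fun x hx => hle₂ (subset_upperClosure hx), (fSet_subset_iff_s18 hQup).2 hm.1.2.2⟩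
  · exact isPrimeLatFilter_of_maximal hQ hM.1 hM.2.2.1 hM.monotone_right hm.1.2.1
      hm.fst_isFilterPairInto
  · exact isPrimeLatFilter_of_maximal (φ := flip f) hQ (fun x y a => hM.2.1 a x y) hM.2.2.2.1
      hM.monotone_left hm.1.1 hm.snd_isFilterPairInto
end
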